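/- The Study quadric S = {[x₀:x₁:x₂:x₃:y₀:y₁:y₂:y₃] ∈ ℙ⁷(ℝ) : Σᵢ xᵢyᵢ = 0} minus the 3-plane E = {x₀=x₁=x₂=x₃=0} is in bijection with SE(3,ℝ), via [x,y] ↦ (u ↦ (1/Δ(x))(R(x)u + t(x,y))), where Δ(x) = Σ xᵢ², R is the quaternion rotation matrix formula and t the translation formula. -/

import Mathlib

open Matrix

/-- The quaternion rotation matrix formula, homogeneous of degree 2. -/
def Rmat (x : Fin 4 → ℝ) : Matrix (Fin 3) (Fin 3) ℝ :=
  !![x 0 ^ 2 + x 1 ^ 2 - x 2 ^ 2 - x 3 ^ 2, 2 * (x 1 * x 2 - x 0 * x 3), 2 * (x 1 * x 3 + x 0 * x 2);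
     2 * (x 1 * x 2 + x 0 * x 3), x 0 ^ 2 - x 1 ^ 2 + x 2 ^ 2 - x 3 ^ 2, 2 * (x 2 * x 3 - x 0 * x 1);
     2 * (x 1 * x 3 - x 0 * x 2), 2 * (x 2 * x 3 + x 0 * x 1), x 0 ^ 2 - x 1 ^ 2 - x 2 ^ 2 + x 3 ^ 2]

/-- The Study translation vector `t(x, y)`. -/
def tvec (x y : Fin 4 → ℝ) : Fin 3 → ℝ :=
  ![2 * (x 0 * y 1 - x 1 * y 0 + x 2 * y 3 - x 3 * y 2),
    2 * (x 0 * y 2 - x 1 * y 3 - x 2 * y 0 + x 3 * y 1),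
    2 * (x 0 * y 3 + x 1 * y 2 - x 2 * y 1 - x 3 * y 0)]

/-- `Δ(x) = Σ xᵢ²`. -/
def Delta (x : Fin 4 → ℝ) : ℝ := ∑ i : Fin 4, x i ^ 2

/-- The rigid motion `u ↦ (1/Δ(x)) (R(x) u + t(x, y))` attached to Study coordinates. -/
noncomputable def motionF (x y : Fin 4 → ℝ) : (Fin 3 → ℝ) → (Fin 3 → ℝ) :=
  fun u => (Delta x)⁻¹ • ((Rmat x).mulVec u + tvec x y)

/-- `SE(3, ℝ)`: rigid motions `u ↦ R u + t` with `R ∈ SO(3, ℝ)`. -/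
def SE3 : Set ((Fin 3 → ℝ) → (Fin 3 → ℝ)) :=
  {f | ∃ (R : Matrix (Fin 3) (Fin 3) ℝ) (t : Fin 3 → ℝ),
    R * Rᵀ = 1 ∧ R.det = 1 ∧ f = fun u => R.mulVec u + t}

/-!
Identify `x` with the quaternion `q = x₀ + x₁i + x₂j + x₃k` and `u ∈ ℝ³` with a pure quaternion.
Then `R(x) u = q u q̄` and, on the Study quadric, `t(x, y) = 2 y q̄`, so the motion attached to
`[x, y]` is `u ↦ (q u + 2 y) q⁻¹`. If two such motions agree, then `q'⁻¹ q` commutes with every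
pure quaternion, hence is a nonzero real `r`, and comparing translations gives `y' = r⁻¹ y`.
That `R(x) / Δ(x)` lies in `SO(3)` is a polynomial identity. Conversely, for `R ∈ SO(3)` the
symmetric matrix `studyMatrix R` has trace 4 and each of its rows `v` satisfies `R(v) = Δ(v) R`;
a nonzero row serves as `x`, and `y = t x / 2` (with `t` a pure quaternion) gives the translation.
-/

open scoped Quaternion

def quat : (Fin 4 → ℝ) ≃ ℍ[ℝ] := (Quaternion.equivTuple ℝ).symm

def vecQuat (u : Fin 3 → ℝ) : ℍ[ℝ] := ⟨0, u 0, u 1, u 2⟩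

@[simp] lemma re_quat (x : Fin 4 → ℝ) : (quat x).re = x 0 := rfl
@[simp] lemma imI_quat (x : Fin 4 → ℝ) : (quat x).imI = x 1 := rfl
@[simp] lemma imJ_quat (x : Fin 4 → ℝ) : (quat x).imJ = x 2 := rfl
@[simp] lemma imK_quat (x : Fin 4 → ℝ) : (quat x).imK = x 3 := rfl

@[simp] lemma re_vecQuat (u : Fin 3 → ℝ) : (vecQuat u).re = 0 := rfl
@[simp] lemma imI_vecQuat (u : Fin 3 → ℝ) : (vecQuat u).imI = u 0 := rfl
@[simp] lemma imJ_vecQuat (u : Fin 3 → ℝ) : (vecQuat u).imJ = u 1 := rfl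
@[simp] lemma imK_vecQuat (u : Fin 3 → ℝ) : (vecQuat u).imK = u 2 := rfl

lemma quat_smul (c : ℝ) (x : Fin 4 → ℝ) : quat (c • x) = c • quat x := by
  ext <;> simp

lemma vecQuat_add (u v : Fin 3 → ℝ) : vecQuat (u + v) = vecQuat u + vecQuat v := by
  ext <;> simp

lemma vecQuat_smul (c : ℝ) (u : Fin 3 → ℝ) : vecQuat (c • u) = c • vecQuat u := by
  ext <;> simp

@[simp] lemma vecQuat_zero : vecQuat 0 = 0 := by
  ext <;> simp

lemma vecQuat_injective : Function.Injective vecQuat := by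
  intro u v h
  ext i
  fin_cases i
  exacts [congrArg QuaternionAlgebra.imI h, congrArg QuaternionAlgebra.imJ h,
    congrArg QuaternionAlgebra.imK h]

lemma Delta_eq_normSq (x : Fin 4 → ℝ) : Delta x = Quaternion.normSq (quat x) := by
  simp [Delta, Quaternion.normSq_def', Fin.sum_univ_four]

lemma sum_mul_eq_re_mul_star (x y : Fin 4 → ℝ) :
    ∑ i, x i * y i = (quat y * star (quat x)).re := by
  simp only [Fin.sum_univ_four, Quaternion.re_mul, re_quat, Quaternion.re_star, imI_quat,
    Quaternion.imI_star, imJ_quat, Quaternion.imJ_star, imK_quat, Quaternion.imK_star]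
  ring

lemma vecQuat_Rmat_mulVec (x : Fin 4 → ℝ) (u : Fin 3 → ℝ) :
    vecQuat (Rmat x *ᵥ u) = quat x * vecQuat u * star (quat x) := by
  ext <;> simp [Rmat, dotProduct, Fin.sum_univ_three] <;> ring

lemma vecQuat_tvec {x y : Fin 4 → ℝ} (hxy : ∑ i, x i * y i = 0) :
    vecQuat (tvec x y) = (2 : ℝ) • (quat y * star (quat x)) := by
  rw [sum_mul_eq_re_mul_star] at hxy
  ext
  · simp [hxy]
  all_goals simp [tvec]; ring

lemma vecQuat_motionF {x y : Fin 4 → ℝ} (hxy : ∑ i, x i * y i = 0) (u : Fin 3 → ℝ) :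
    vecQuat (motionF x y u) = (quat x * vecQuat u + (2 : ℝ) • quat y) * (quat x)⁻¹ := by
  rw [motionF, vecQuat_smul, vecQuat_add, vecQuat_Rmat_mulVec, vecQuat_tvec hxy,
    Quaternion.inv_def, Delta_eq_normSq, mul_smul_comm, add_mul, smul_mul_assoc]

lemma Rmat_smul (c : ℝ) (x : Fin 4 → ℝ) : Rmat (c • x) = c ^ 2 • Rmat x := by
  ext i j
  fin_cases i <;> fin_cases j <;> simp [Rmat] <;> ring

lemma tvec_smul (c : ℝ) (x y : Fin 4 → ℝ) : tvec (c • x) (c • y) = c ^ 2 • tvec x y := by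
  ext i
  fin_cases i <;> simp [tvec] <;> ring

lemma Delta_smul (c : ℝ) (x : Fin 4 → ℝ) : Delta (c • x) = c ^ 2 * Delta x := by
  simp [Delta, mul_pow, Finset.mul_sum]

lemma motionF_smul (x y : Fin 4 → ℝ) {c : ℝ} (hc : c ≠ 0) :
    motionF (c • x) (c • y) = motionF x y := by
  funext u
  rw [motionF, motionF, Rmat_smul, tvec_smul, Delta_smul, smul_mulVec, ← smul_add, smul_smul,
    _root_.mul_inv_rev, inv_mul_cancel_right₀ (pow_ne_zero 2 hc)]

lemma Rmat_mul_transpose (x : Fin 4 → ℝ) : Rmat x * (Rmat x)ᵀ = Delta x ^ 2 • 1 := by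
  ext i j
  fin_cases i <;> fin_cases j <;>
    simp [Rmat, mul_apply, Fin.sum_univ_three, Delta, Fin.sum_univ_four] <;> ring

lemma det_Rmat (x : Fin 4 → ℝ) : (Rmat x).det = Delta x ^ 3 := by
  simp only [det_fin_three, Rmat, of_apply, cons_val', cons_val_zero, cons_val_one, cons_val,
    cons_val_fin_one, Delta, Fin.sum_univ_four]
  ring

lemma motionF_mem_SE3 (x y : Fin 4 → ℝ) (hx : Delta x ≠ 0) : motionF x y ∈ SE3 := by
  refine ⟨(Delta x)⁻¹ • Rmat x, (Delta x)⁻¹ • tvec x y, ?_, ?_, ?_⟩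
  · rw [transpose_smul, smul_mul_smul_comm, Rmat_mul_transpose, smul_smul]
    field_simp
    rw [one_smul]
  · rw [det_smul, det_Rmat, Fintype.card_fin]
    field_simp
  · funext u
    rw [motionF, smul_add, smul_mulVec]

lemma eq_coe_re_of_forall_commute {p : ℍ[ℝ]} (h : ∀ u, p * vecQuat u = vecQuat u * p) :
    p = p.re := by
  have hiJ := congrArg QuaternionAlgebra.imJ (h ![1, 0, 0])
  have hiK := congrArg QuaternionAlgebra.imK (h ![1, 0, 0])
  have hjK := congrArg QuaternionAlgebra.imK (h ![0, 1, 0])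
  simp only [Quaternion.imJ_mul, Quaternion.imK_mul, re_vecQuat, imI_vecQuat, imJ_vecQuat,
    imK_vecQuat, cons_val_zero, cons_val_one, cons_val, mul_zero, mul_one, zero_mul, one_mul,
    add_zero, zero_add, sub_zero, zero_sub, sub_self] at hiJ hiK hjK
  ext <;> simp <;> linarith

lemma exists_eq_smul_of_affine_conj_eq {q q' a a' : ℍ[ℝ]} (hq : q ≠ 0) (hq' : q' ≠ 0)
    (h : ∀ u, (q * vecQuat u + a) * q⁻¹ = (q' * vecQuat u + a') * q'⁻¹) :
    ∃ c : ℝ, c ≠ 0 ∧ q' = c • q ∧ a' = c • a := by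
  have ha : a * q⁻¹ = a' * q'⁻¹ := by simpa using h 0
  have hconj (u) : q * vecQuat u * q⁻¹ = q' * vecQuat u * q'⁻¹ := by
    simpa only [add_mul, ha, add_left_inj] using h u
  have hcomm (u) : q'⁻¹ * q * vecQuat u = vecQuat u * (q'⁻¹ * q) := by
    calc q'⁻¹ * q * vecQuat u = q'⁻¹ * (q * vecQuat u * q⁻¹) * q := by
          simp only [mul_assoc, inv_mul_cancel₀ hq, mul_one]
      _ = vecQuat u * (q'⁻¹ * q) := by
          rw [hconj]; simp only [← mul_assoc, inv_mul_cancel₀ hq', one_mul]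
  set r := (q'⁻¹ * q).re
  have hr : q'⁻¹ * q = r := eq_coe_re_of_forall_commute hcomm
  have hr0 : r ≠ 0 := by
    rintro hr0
    rw [hr0, Quaternion.coe_zero] at hr
    exact mul_ne_zero (inv_ne_zero hq') hq hr
  have hq'q : q' = r⁻¹ • q := by
    rw [← Quaternion.mul_coe_eq_smul, Quaternion.coe_inv, ← hr, _root_.mul_inv_rev, inv_inv,
      mul_inv_cancel_left₀ hq]
  refine ⟨r⁻¹, inv_ne_zero hr0, hq'q, ?_⟩
  rw [← inv_mul_cancel_right₀ hq' a', ← ha, hq'q, mul_smul_comm, inv_mul_cancel_right₀ hq]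

lemma Delta_ne_zero_iff {x : Fin 4 → ℝ} : Delta x ≠ 0 ↔ x ≠ 0 := by
  rw [Delta_eq_normSq, Quaternion.normSq_ne_zero, ← quat.injective.ne_iff]
  rfl

lemma exists_eq_smul_of_motionF_eq {x y x' y' : Fin 4 → ℝ} (hxy : ∑ i, x i * y i = 0)
    (hx : Delta x ≠ 0) (hxy' : ∑ i, x' i * y' i = 0) (hx' : Delta x' ≠ 0)
    (h : motionF x y = motionF x' y') : ∃ c : ℝ, c ≠ 0 ∧ x' = c • x ∧ y' = c • y := by
  rw [Delta_eq_normSq, Quaternion.normSq_ne_zero] at hx hx'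
  have hconj (u) : (quat x * vecQuat u + (2 : ℝ) • quat y) * (quat x)⁻¹ =
      (quat x' * vecQuat u + (2 : ℝ) • quat y') * (quat x')⁻¹ := by
    rw [← vecQuat_motionF hxy, ← vecQuat_motionF hxy', h]
  obtain ⟨c, hc, hqx, hqy⟩ := exists_eq_smul_of_affine_conj_eq hx hx' hconj
  rw [smul_comm, (smul_right_injective _ two_ne_zero).eq_iff] at hqy
  refine ⟨c, hc, quat.injective ?_, quat.injective ?_⟩ <;> rw [quat_smul] <;> assumption

/-- For `R = Rmat x / Delta x` this matrix is `4 x xᵀ / Delta x`. -/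
def studyMatrix (R : Matrix (Fin 3) (Fin 3) ℝ) : Matrix (Fin 4) (Fin 4) ℝ :=
  !![1 + R 0 0 + R 1 1 + R 2 2, R 2 1 - R 1 2, R 0 2 - R 2 0, R 1 0 - R 0 1;
     R 2 1 - R 1 2, 1 + R 0 0 - R 1 1 - R 2 2, R 1 0 + R 0 1, R 0 2 + R 2 0;
     R 0 2 - R 2 0, R 1 0 + R 0 1, 1 - R 0 0 + R 1 1 - R 2 2, R 2 1 + R 1 2;
     R 1 0 - R 0 1, R 0 2 + R 2 0, R 2 1 + R 1 2, 1 - R 0 0 - R 1 1 + R 2 2]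

lemma trace_studyMatrix (R : Matrix (Fin 3) (Fin 3) ℝ) : (studyMatrix R).trace = 4 := by
  simp only [trace, studyMatrix, diag_apply, of_apply, cons_val', cons_val_zero, cons_val_one,
    cons_val, cons_val_fin_one, Fin.sum_univ_four]
  ring

lemma adjugate_eq_transpose {R : Matrix (Fin 3) (Fin 3) ℝ} (hR : R * Rᵀ = 1) (hdet : R.det = 1) :
    adjugate R = Rᵀ := by
  rw [← inv_eq_right_inv hR, inv_def, hdet, Ring.inverse_one, one_smul]

lemma Rmat_studyMatrix {R : Matrix (Fin 3) (Fin 3) ℝ} (hR : R * Rᵀ = 1) (hdet : R.det = 1)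
    (k : Fin 4) : Rmat (studyMatrix R k) = Delta (studyMatrix R k) • R := by
  have hadj := adjugate_eq_transpose hR hdet
  rw [← Matrix.ext_iff] at hR hadj
  simp only [mul_apply, transpose_apply, Fin.sum_univ_three, one_apply, Fin.forall_fin_succ,
    Fin.succ_zero_eq_one, Fin.succ_one_eq_two, IsEmpty.forall_iff, and_true, ↓reduceIte,
    zero_ne_one, Fin.reduceEq, Fin.succ_ne_zero, adjugate_fin_three, of_apply, cons_val',
    cons_val_fin_one, cons_val_zero, cons_val_succ] at hR hadj
  ext i j
  fin_cases k <;> fin_cases i <;> fin_cases j <;>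
    simp [Rmat, studyMatrix, Delta, Fin.sum_univ_four] <;> grind

lemma exists_Rmat_eq_smul {R : Matrix (Fin 3) (Fin 3) ℝ} (hR : R * Rᵀ = 1) (hdet : R.det = 1) :
    ∃ x, Delta x ≠ 0 ∧ Rmat x = Delta x • R := by
  obtain ⟨k, hk⟩ : ∃ k, studyMatrix R k k ≠ 0 := by
    by_contra! h
    simpa [trace, h] using trace_studyMatrix R
  exact ⟨studyMatrix R k, Delta_ne_zero_iff.2 (ne_of_apply_ne (· k) hk),
    Rmat_studyMatrix hR hdet k⟩

lemma exists_motionF_eq {R : Matrix (Fin 3) (Fin 3) ℝ} (hR : R * Rᵀ = 1) (hdet : R.det = 1)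
    (t : Fin 3 → ℝ) : ∃ x y : Fin 4 → ℝ, (∑ i, x i * y i = 0) ∧ Delta x ≠ 0 ∧
      motionF x y = fun u => R *ᵥ u + t := by
  obtain ⟨x, hx, hRx⟩ := exists_Rmat_eq_smul hR hdet
  set y := quat.symm ((2 : ℝ)⁻¹ • (vecQuat t * quat x))
  have hqxx : quat x * star (quat x) = (Delta x : ℍ[ℝ]) := by
    rw [Quaternion.self_mul_star, Delta_eq_normSq]
  have hyx : quat y * star (quat x) = (2 : ℝ)⁻¹ • (Delta x • vecQuat t) := by
    rw [Equiv.apply_symm_apply, smul_mul_assoc, mul_assoc, hqxx, Quaternion.mul_coe_eq_smul]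
  have hxy : ∑ i, x i * y i = 0 := by
    simp [sum_mul_eq_re_mul_star, hyx]
  have ht : tvec x y = Delta x • t := by
    apply vecQuat_injective
    rw [vecQuat_tvec hxy, hyx, smul_inv_smul₀ two_ne_zero, vecQuat_smul]
  refine ⟨x, y, hxy, hx, funext fun u => ?_⟩
  rw [motionF, hRx, ht, smul_mulVec, ← smul_add, inv_smul_smul₀ hx]

/-- The Study quadric minus the exceptional 3-plane is in one-to-one correspondence with
`SE(3, ℝ)`: the map `[x, y] ↦ (u ↦ (1/Δ(x))(R(x) u + t(x, y)))` lands in `SE(3, ℝ)`,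
two points of `S \ E` have the same image iff they are projectively equal, and every
rigid motion is attained. -/
theorem stmt10 :
    (∀ x y : Fin 4 → ℝ, (∑ i : Fin 4, x i * y i = 0) → Delta x ≠ 0 →
      motionF x y ∈ SE3) ∧
    (∀ x y x' y' : Fin 4 → ℝ, (∑ i : Fin 4, x i * y i = 0) → Delta x ≠ 0 →
      (∑ i : Fin 4, x' i * y' i = 0) → Delta x' ≠ 0 →
      (motionF x y = motionF x' y' ↔ ∃ c : ℝ, c ≠ 0 ∧ x' = c • x ∧ y' = c • y)) ∧
    (∀ f ∈ SE3, ∃ x y : Fin 4 → ℝ, (∑ i : Fin 4, x i * y i = 0) ∧ Delta x ≠ 0 ∧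
      motionF x y = f) := by
  refine ⟨fun x y _ hx => motionF_mem_SE3 x y hx, fun x y x' y' hxy hx hxy' hx' => ⟨
    exists_eq_smul_of_motionF_eq hxy hx hxy' hx', ?_⟩, ?_⟩
  · rintro ⟨c, hc, rfl, rfl⟩
    exact (motionF_smul x y hc).symm
  · rintro f ⟨R, t, hR, hdet, rfl⟩
    exact exists_motionF_eq hR hdet t
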